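/- If a timed automaton T is history-deterministic, then for every timed game G with winning condition L(T), whenever Player 2 wins G she also wins the composition game G ∘ T. -/
import Mathlib


open scoped NNReal

/-- Clock constraints (guards): Boolean combinations of `x ≤ n`, `x < n`,
`x − y ≤ n`, `x − y < n`. -/
inductive Guard (C : Type) where
  | tt : Guard C
  | le (x : C) (n : ℕ) : Guard C
  | lt (x : C) (n : ℕ) : Guard C
  | dle (x y : C) (n : ℕ) : Guard C
  | dlt (x y : C) (n : ℕ) : Guard C
  | band (g₁ g₂ : Guard C) : Guard C
  | bnot (g : Guard C) : Guard C

/-- Satisfaction of a guard by a clock valuation. -/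
def Guard.sat {C : Type} : Guard C → (C → ℝ≥0) → Prop
  | .tt, _ => True
  | .le x n, ν => (ν x : ℝ) ≤ n
  | .lt x n, ν => (ν x : ℝ) < n
  | .dle x y n, ν => (ν x : ℝ) - (ν y : ℝ) ≤ n
  | .dlt x y n, ν => (ν x : ℝ) - (ν y : ℝ) < n
  | .band g₁ g₂, ν => g₁.sat ν ∧ g₂.sat ν
  | .bnot g, ν => ¬ g.sat ν

/-- The largest constant appearing in a guard in a constraint involving clock `z`. -/
def Guard.maxConst {C : Type} [DecidableEq C] : Guard C → C → ℕ
  | .tt, _ => 0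
  | .le x n, z => if z = x then n else 0
  | .lt x n, z => if z = x then n else 0
  | .dle x y n, z => if z = x ∨ z = y then n else 0
  | .dlt x y n, z => if z = x ∨ z = y then n else 0
  | .band g₁ g₂, z => max (g₁.maxConst z) (g₂.maxConst z)
  | .bnot g, z => g.maxConst z

/-- A transition of a timed automaton: source, guard, letter, reset set, destination. -/
structure Tr (Q C A : Type) where
  src : Q
  guard : Guard C
  letter : A
  reset : Set C
  dst : Q

/-- A timed automaton (the acceptance condition is kept as a separate parameter). -/
structure TA (Q C A : Type) where
  init : Q
  trans : Set (Tr Q C A)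

namespace TA

variable {Q C A : Type}

/-- The valuation obtained from `ν` by resetting the clocks of transition `τ`. -/
noncomputable def resetVal (τ : Tr Q C A) (ν : C → ℝ≥0) : C → ℝ≥0 :=
  fun x => open Classical in if x ∈ τ.reset then 0 else ν x


/-- Timed words: infinite sequences of letters with strictly increasing timestamps. -/
def IsTimedWord (w : ℕ → A × ℝ≥0) : Prop :=
  StrictMono fun n => (w n).2

/-- The delay elapsing before the `n`-th event of the timed word `w`. -/
noncomputable def delayAt (w : ℕ → A × ℝ≥0) (n : ℕ) : ℝ≥0 :=
  (w n).2 - (if n = 0 then 0 else (w (n - 1)).2)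

/-- The configurations visited along the transition sequence `ρ` on the timed word `w`:
before each discrete step, time elapses up to the next timestamp. -/
noncomputable def configs (T : TA Q C A) (w : ℕ → A × ℝ≥0) (ρ : ℕ → Tr Q C A) :
    ℕ → Q × (C → ℝ≥0)
  | 0 => (T.init, fun _ => 0)
  | n + 1 => ((ρ n).dst, resetVal (ρ n) (fun x => (configs T w ρ n).2 x + delayAt w n))

/-- `ρ` is a run of `T` on the timed word `w` from the initial configuration. -/
def IsRunOn (T : TA Q C A) (w : ℕ → A × ℝ≥0) (ρ : ℕ → Tr Q C A) : Prop :=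
  ∀ n, ρ n ∈ T.trans ∧ (ρ n).letter = (w n).1 ∧ (ρ n).src = (T.configs w ρ n).1 ∧
    (ρ n).guard.sat (fun x => (T.configs w ρ n).2 x + delayAt w n)

/-- The timed language of `T` for the acceptance condition `Acc` on runs. -/
def Lang (T : TA Q C A) (Acc : (ℕ → Tr Q C A) → Prop) : Set (ℕ → A × ℝ≥0) :=
  {w | IsTimedWord w ∧ ∃ ρ, T.IsRunOn w ρ ∧ Acc ρ}

/-- Safety acceptance: all states along the run stay in the safe set. -/
def safetyAcc (safe : Set Q) (ρ : ℕ → Tr Q C A) : Prop :=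
  ∀ n, (ρ n).src ∈ safe ∧ (ρ n).dst ∈ safe

/-- Reachability acceptance: the run visits a state of the target set. -/
def reachAcc (F : Set Q) (ρ : ℕ → Tr Q C A) : Prop :=
  ∃ n, (ρ n).src ∈ F ∨ (ρ n).dst ∈ F

/-- The finite history (timed letters paired with chosen transitions) built by iterating
a candidate resolver `r` on the timed word `w`. -/
def histOf (r : List ((A × ℝ≥0) × Tr Q C A) → (A × ℝ≥0) → Tr Q C A)
    (w : ℕ → A × ℝ≥0) : ℕ → List ((A × ℝ≥0) × Tr Q C A)
  | 0 => []
  | n + 1 => histOf r w n ++ [(w n, r (histOf r w n) (w n))]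

/-- The run built by iterating the resolver `r` on the timed word `w`. -/
def runOf (r : List ((A × ℝ≥0) × Tr Q C A) → (A × ℝ≥0) → Tr Q C A)
    (w : ℕ → A × ℝ≥0) (n : ℕ) : Tr Q C A :=
  r (histOf r w n) (w n)

/-- `r` is a resolver for `T` with acceptance `Acc`. -/
def IsResolver (T : TA Q C A) (Acc : (ℕ → Tr Q C A) → Prop)
    (r : List ((A × ℝ≥0) × Tr Q C A) → (A × ℝ≥0) → Tr Q C A) : Prop :=
  ∀ w ∈ T.Lang Acc, T.IsRunOn w (runOf r w) ∧ Acc (runOf r w)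

/-- History-determinism: existence of a resolver. -/
def HD (T : TA Q C A) (Acc : (ℕ → Tr Q C A) → Prop) : Prop :=
  ∃ r, T.IsResolver Acc r

/-- Determinism: transitions from the same state over the same letter have mutually
exclusive guards. -/
def Deterministic (T : TA Q C A) : Prop :=
  ∀ τ₁ ∈ T.trans, ∀ τ₂ ∈ T.trans, τ₁.src = τ₂.src → τ₁.letter = τ₂.letter →
    τ₁ ≠ τ₂ → ∀ ν : C → ℝ≥0, ¬(τ₁.guard.sat ν ∧ τ₂.guard.sat ν)

end TA

open scoped NNReal

/-- A (turn-based) timed game: a timed arena together with an ownership function on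
states (`true` = Player 2). The winning condition is a separate parameter. -/
structure TGame (Q C A : Type) where
  ta : TA Q C A
  owner : Q → Bool

namespace TGame

variable {Q C A : Type}

/-- Configurations visited along a sequence of moves (delay, transition). -/
noncomputable def gConfigs (G : TGame Q C A) (m : ℕ → ℝ≥0 × Tr Q C A) :
    ℕ → Q × (C → ℝ≥0)
  | 0 => (G.ta.init, fun _ => 0)
  | n + 1 => ((m n).2.dst,
      TA.resetVal (m n).2 fun x => (gConfigs G m n).2 x + (m n).1)

/-- The `n`-th move is legal: its transition belongs to the arena, starts at the current
state, and its guard is satisfied after the chosen delay. -/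
def Legal (G : TGame Q C A) (m : ℕ → ℝ≥0 × Tr Q C A) (n : ℕ) : Prop :=
  (m n).2 ∈ G.ta.trans ∧ (m n).2.src = (gConfigs G m n).1 ∧
    (m n).2.guard.sat fun x => (gConfigs G m n).2 x + (m n).1

/-- The timed word emitted by a play: letters of the transitions with cumulative
timestamps. -/
noncomputable def wordOf (m : ℕ → ℝ≥0 × Tr Q C A) : ℕ → A × ℝ≥0 :=
  fun n => ((m n).2.letter, ∑ i ∈ Finset.range (n + 1), (m i).1)

/-- The list of the first `n` moves. -/
def pre {M : Type} (m : ℕ → M) (n : ℕ) : List M :=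
  List.ofFn fun i : Fin n => m i

/-- Player 2 wins the timed game `G` with winning condition `L`: she has a strategy
dictating her moves at her states such that in every play consistent with it in which
Player 1 moves legally, all moves are legal and the emitted timed word is in `L`. -/
def P2Wins (G : TGame Q C A) (L : Set (ℕ → A × ℝ≥0)) : Prop :=
  ∃ σ : List (ℝ≥0 × Tr Q C A) → ℝ≥0 × Tr Q C A,
    ∀ m : ℕ → ℝ≥0 × Tr Q C A,
      (∀ n, G.owner (gConfigs G m n).1 = true → m n = σ (pre m n)) →
      (∀ n, G.owner (gConfigs G m n).1 = false → G.Legal m n) →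
      (∀ n, G.Legal m n) ∧ wordOf m ∈ L

end TGame

namespace TA

variable {QG CG Q C A : Type}

/-- A move of the composition game `G ∘ T`: a delay, a transition of the arena, and a
transition of the automaton `T`. -/
abbrev CMove (QG CG Q C A : Type) := ℝ≥0 × Tr QG CG A × Tr Q C A

/-- Configurations of the `T`-component along a play of the composition game. -/
noncomputable def compConfigs (T : TA Q C A) (m : ℕ → CMove QG CG Q C A) :
    ℕ → Q × (C → ℝ≥0)
  | 0 => (T.init, fun _ => 0)
  | n + 1 => ((m n).2.2.dst,
      TA.resetVal (m n).2.2 fun x => (compConfigs T m n).2 x + (m n).1)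

/-- Legality of the `T`-component of the `n`-th move: a transition of `T` from the
current configuration, enabled after the delay, reading the letter emitted in `G`. -/
def LegalT (T : TA Q C A) (m : ℕ → CMove QG CG Q C A) (n : ℕ) : Prop :=
  (m n).2.2 ∈ T.trans ∧ (m n).2.2.src = (compConfigs T m n).1 ∧
    ((m n).2.2.guard.sat fun x => (compConfigs T m n).2 x + (m n).1) ∧
    (m n).2.2.letter = (m n).2.1.letter

/-- The arena part of a play of the composition game. -/
def arenaPart (m : ℕ → CMove QG CG Q C A) : ℕ → ℝ≥0 × Tr QG CG A :=
  fun n => ((m n).1, (m n).2.1)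

/-- Player 2 wins the composition game `G ∘ T`: she has strategies choosing her arena
moves (at her states) and, after every round, a transition of `T` over the emitted
letter, such that in every consistent play in which Player 1 moves legally, her moves
are legal and the run built in `T` is accepting. -/
def P2WinsComp (G : TGame QG CG A) (T : TA Q C A)
    (Acc : (ℕ → Tr Q C A) → Prop) : Prop :=
  ∃ (σ : List (CMove QG CG Q C A) → ℝ≥0 × Tr QG CG A)
    (τ : List (CMove QG CG Q C A) → ℝ≥0 × Tr QG CG A → Tr Q C A),
    ∀ m : ℕ → CMove QG CG Q C A,
      (∀ n, G.owner (TGame.gConfigs G (arenaPart m) n).1 = true →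
        arenaPart m n = σ (TGame.pre m n)) →
      (∀ n, (m n).2.2 = τ (TGame.pre m n) (arenaPart m n)) →
      (∀ n, G.owner (TGame.gConfigs G (arenaPart m) n).1 = false →
        G.Legal (arenaPart m) n) →
      (∀ n, G.Legal (arenaPart m) n) ∧ (∀ n, LegalT T m n) ∧
        Acc (fun n => (m n).2.2)

end TA

namespace TA

variable {QG CG Q C A : Type}

/-- One folding step reconstructing the resolver history from a composition history. -/
noncomputable def compStep (r : List ((A × ℝ≥0) × Tr Q C A) → (A × ℝ≥0) → Tr Q C A)
    (st : List ((A × ℝ≥0) × Tr Q C A) × ℝ≥0) (c : CMove QG CG Q C A) :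
    List ((A × ℝ≥0) × Tr Q C A) × ℝ≥0 :=
  let a : A × ℝ≥0 := (c.2.1.letter, st.2 + c.1)
  (st.1 ++ [(a, r st.1 a)], st.2 + c.1)

/-- Reconstruct the resolver history and total elapsed time from a composition history. -/
noncomputable def compFold (r : List ((A × ℝ≥0) × Tr Q C A) → (A × ℝ≥0) → Tr Q C A)
    (l : List (CMove QG CG Q C A)) : List ((A × ℝ≥0) × Tr Q C A) × ℝ≥0 :=
  l.foldl (compStep r) ([], 0)

theorem pre_succ {M : Type} (m : ℕ → M) (n : ℕ) :
    TGame.pre m (n + 1) = TGame.pre m n ++ [m n] := by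
  rw [TGame.pre, TGame.pre, List.ofFn_succ', List.concat_eq_append]
  simp

theorem compFold_pre (r : List ((A × ℝ≥0) × Tr Q C A) → (A × ℝ≥0) → Tr Q C A)
    (m : ℕ → CMove QG CG Q C A) (n : ℕ) :
    compFold r (TGame.pre m n) =
      (histOf r (TGame.wordOf (arenaPart m)) n, ∑ i ∈ Finset.range n, (m i).1) := by
  induction n with
  | zero => simp [compFold, TGame.pre, histOf]
  | succ n ih =>
      rw [pre_succ]
      simp only [compFold, List.foldl_append, List.foldl_cons, List.foldl_nil] at *
      rw [ih]
      simp [compStep, histOf, Finset.sum_range_succ, TGame.wordOf, arenaPart]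

theorem delayAt_wordOf (m : ℕ → CMove QG CG Q C A) (n : ℕ) :
    delayAt (TGame.wordOf (arenaPart m)) n = (m n).1 := by
  cases n with
  | zero => simp [delayAt, TGame.wordOf, arenaPart]
  | succ n =>
      simp [delayAt, TGame.wordOf, arenaPart, Finset.sum_range_succ]

theorem compConfigs_eq (T : TA Q C A) (m : ℕ → CMove QG CG Q C A) (n : ℕ) :
    compConfigs T m n = configs T (TGame.wordOf (arenaPart m)) (fun k => (m k).2.2) n := by
  induction n with
  | zero => rfl
  | succ n ih =>
      simp only [compConfigs, configs, ih, delayAt_wordOf]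

end TA

/-- if a timed automaton `T` is history-deterministic, then for every
timed game `G` with winning condition `L(T)`, whenever Player 2 wins `G` she also wins
the composition `G ∘ T`. -/
theorem stmt12 {Q C A : Type} (T : TA Q C A) (Acc : (ℕ → Tr Q C A) → Prop)
    (hHD : T.HD Acc) :
    ∀ (QG CG : Type) (G : TGame QG CG A),
      G.P2Wins (T.Lang Acc) → T.P2WinsComp G Acc := by
  obtain ⟨r, hr⟩ := hHD
  intro QG CG G hW
  obtain ⟨σ, hσ⟩ := hW
  classical
  refine ⟨fun l => σ (l.map fun c => (c.1, c.2.1)),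
    fun l mv => r (TA.compFold r l).1 (mv.2.letter, (TA.compFold r l).2 + mv.1),
    fun m hcons hτ hP1 => ?_⟩
  -- consistency of the arena part with σ
  have hmap : ∀ n, (TGame.pre m n).map (fun c : TA.CMove QG CG Q C A => (c.1, c.2.1)) =
      TGame.pre (TA.arenaPart m) n := by
    intro n
    simp only [TGame.pre, List.map_ofFn, TA.arenaPart]
    rfl
  have hG := hσ (TA.arenaPart m)
    (fun n h => (hcons n h).trans (congrArg σ (hmap n))) hP1
  obtain ⟨hLegal, hw⟩ := hG
  set w := TGame.wordOf (TA.arenaPart m) with hwdef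
  -- the T-component equals the resolver run
  have hcomp : ∀ n, (m n).2.2 = TA.runOf r w n := by
    intro n
    rw [hτ n]
    show r (TA.compFold r (TGame.pre m n)).1
      ((TA.arenaPart m n).2.letter, (TA.compFold r (TGame.pre m n)).2 + (TA.arenaPart m n).1) =
      TA.runOf r w n
    rw [TA.compFold_pre]
    simp only [TA.runOf]
    congr 1
    simp [hwdef, TGame.wordOf, TA.arenaPart, Finset.sum_range_succ]
  have hρ : (fun n => (m n).2.2) = TA.runOf r w := funext hcomp
  have hres := hr w hw
  rw [← hρ] at hres
  obtain ⟨hrun, hacc⟩ := hres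
  refine ⟨hLegal, fun n => ?_, hacc⟩
  obtain ⟨h1, h2, h3, h4⟩ := hrun n
  refine ⟨h1, ?_, ?_, ?_⟩
  · rw [h3, TA.compConfigs_eq]
  · rw [TA.compConfigs_eq]
    have := TA.delayAt_wordOf m n
    rw [← hwdef] at this
    rw [← this]
    exact h4
  · rw [h2]
    simp [hwdef, TGame.wordOf, TA.arenaPart]
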